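/- arXiv:1708.07603 — 3 statements merged into one kernel-verified Lean document; each statement's English description precedes it below -/
import Mathlib

section
/- Let k, n be positive integers and let Ξ̂ ⊆ ℝ^k be a closed convex cone. Let S ∈ S^{k+n} be a symmetric matrix with block structure S = [[S₁₁, S₂₁ᵀ], [S₂₁, S₂₂]], where S₁₁ ∈ S^k, S₂₁ ∈ ℝ^{n×k}, and S₂₂ ∈ S^n. Suppose that S₁₁ ∈ COP(Ξ̂), that every row of S₂₁ (viewed as a vector in ℝ^k) belongs to the dual cone Ξ̂*, that every entry of S₂₂ is nonnegative, and that M ∈ S^{k+n} is positive semidefinite. Then S + M ∈ COP(Ξ̂ × ℝ₊ⁿ), where Ξ̂ × ℝ₊ⁿ := {(p; q) ∈ ℝ^{k+n} : p ∈ Ξ̂, q ≥ 0}. -/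
open Matrix

/-- The copositive cone with respect to a set `K ⊆ ℝ^d`: symmetric matrices whose
quadratic form is nonnegative on `K`. -/
def copositiveCone {d : Type*} [Fintype d] (K : Set (d → ℝ)) : Set (Matrix d d ℝ) :=
  {M | M.IsSymm ∧ ∀ x ∈ K, 0 ≤ x ⬝ᵥ (M *ᵥ x)}

/-- The dual cone of a set `K ⊆ ℝ^d`. -/
def dualCone' {d : Type*} [Fintype d] (K : Set (d → ℝ)) : Set (d → ℝ) :=
  {y | ∀ x ∈ K, 0 ≤ y ⬝ᵥ x}

/-- The cone `Ξ̂ × ℝ₊ⁿ ⊆ ℝ^{k+n}`. -/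
def coneProd (n : ℕ) {k : ℕ} (Ξ : Set (Fin k → ℝ)) : Set (Fin k ⊕ Fin n → ℝ) :=
  {z | (fun i => z (Sum.inl i)) ∈ Ξ ∧ ∀ j, 0 ≤ z (Sum.inr j)}

theorem stmt0 (k n : ℕ) (hk : 0 < k) (hn : 0 < n)
    (Ξ : Set (Fin k → ℝ)) (hΞclosed : IsClosed Ξ) (hΞconvex : Convex ℝ Ξ)
    (hΞcone : ∀ (c : ℝ) (x : Fin k → ℝ), 0 ≤ c → x ∈ Ξ → c • x ∈ Ξ)
    (S11 : Matrix (Fin k) (Fin k) ℝ) (S21 : Matrix (Fin n) (Fin k) ℝ)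
    (S22 : Matrix (Fin n) (Fin n) ℝ)
    (M : Matrix (Fin k ⊕ Fin n) (Fin k ⊕ Fin n) ℝ)
    (hS11 : S11 ∈ copositiveCone Ξ)
    (hS21 : ∀ j : Fin n, (fun i => S21 j i) ∈ dualCone' Ξ)
    (hS22symm : S22.IsSymm) (hS22 : ∀ i j, 0 ≤ S22 i j)
    (hM : M.PosSemidef) :
    Matrix.fromBlocks S11 S21ᵀ S21 S22 + M ∈ copositiveCone (coneProd n Ξ) := by
  constructor
  · have h1 : S11.IsSymm := hS11.1
    unfold Matrix.IsSymm at *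
    rw [Matrix.transpose_add, Matrix.fromBlocks_transpose, h1, hS22symm,
      Matrix.transpose_transpose]
    congr 1
    have := hM.1.eq
    rw [Matrix.conjTranspose] at this
    exact Matrix.ext fun i j => by simpa using congrFun (congrFun this i) j
  · intro x hx
    set p : Fin k → ℝ := fun i => x (Sum.inl i) with hp
    set q : Fin n → ℝ := fun j => x (Sum.inr j) with hq
    have hxeq : x = Sum.elim p q := by funext i; cases i <;> rfl
    rw [Matrix.add_mulVec, dotProduct_add]
    have hMpart := hM.dotProduct_mulVec_nonneg x
    simp only [star_trivial] at hMpart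
    have hSpart : 0 ≤ x ⬝ᵥ (Matrix.fromBlocks S11 S21ᵀ S21 S22 *ᵥ x) := by
      rw [hxeq, Matrix.fromBlocks_mulVec, sumElim_dotProduct_sumElim,
        dotProduct_add, dotProduct_add]
      simp only [Sum.elim_comp_inl, Sum.elim_comp_inr]
      have t1 : 0 ≤ p ⬝ᵥ (S11 *ᵥ p) := hS11.2 p hx.1
      have t2 : 0 ≤ p ⬝ᵥ (S21ᵀ *ᵥ q) := by
        rw [Matrix.dotProduct_mulVec, Matrix.vecMul_transpose]
        have : S21 *ᵥ p = fun j => (fun i => S21 j i) ⬝ᵥ p := rfl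
        rw [this]
        exact Finset.sum_nonneg fun j _ =>
          mul_nonneg (hS21 j p hx.1) (hx.2 j)
      have t3 : 0 ≤ q ⬝ᵥ (S21 *ᵥ p) := by
        have : S21 *ᵥ p = fun j => (fun i => S21 j i) ⬝ᵥ p := rfl
        rw [this]
        exact Finset.sum_nonneg fun j _ =>
          mul_nonneg (hx.2 j) (hS21 j p hx.1)
      have t4 : 0 ≤ q ⬝ᵥ (S22 *ᵥ q) := by
        simp only [dotProduct, Matrix.mulVec]
        refine Finset.sum_nonneg fun j _ => mul_nonneg (hx.2 j) ?_
        exact Finset.sum_nonneg fun j' _ => mul_nonneg (hS22 j j') (hx.2 j')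
      linarith
    linarith
end

section
/- With the data E, H^i(λ), Q_j, g₁ defined from (A, F, b, B, Ξ̂, ξ̂^i) as in the context, and λ ≥ 0, define Ω := {(ξ, x) ∈ ℝ^k × ℝ^n : Ax = b, x ≥ 0, x_j ∈ {0,1} for all j ∈ B, ξ ∈ Ξ̂, e₁ᵀξ = 1} and Ω' := {z ∈ Ξ̂ × ℝ₊ⁿ : Ez = 0, g₁ᵀz = 1, zᵀz ≤ r, zᵀQ_j z = 0 for all j ∈ B}. Suppose Ω is nonempty and r is a real number with r ≥ ‖ξ‖² + ‖x‖² for all (ξ, x) ∈ Ω. Then Ω' = {(ξ; x) : (ξ, x) ∈ Ω}, and consequently sup_{(ξ,x) ∈ Ω} [(Fξ)ᵀx − λ‖ξ − ξ̂^i‖²] = sup_{z ∈ Ω'} zᵀ H^i(λ) z. -/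
open Matrix

/-- The first standard basis vector `e₁` of `ℝ^k`. -/
def e1 (k : ℕ) : Fin k → ℝ := fun i => if (i : ℕ) = 0 then 1 else 0

/-- The vector `g₁ = (e₁; 0) ∈ ℝ^{k+n}`. -/
def g1 (k n : ℕ) : Fin k ⊕ Fin n → ℝ := Sum.elim (e1 k) 0

/-- The matrix `E = (−b e₁ᵀ  A) ∈ ℝ^{m×(k+n)}`. -/
noncomputable def Emat {m n : ℕ} (k : ℕ) (A : Matrix (Fin m) (Fin n) ℝ) (b : Fin m → ℝ) :
    Matrix (Fin m) (Fin k ⊕ Fin n) ℝ :=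
  Matrix.of fun a => Sum.elim (fun i => -(b a) * e1 k i) (fun j => A a j)

/-- The matrix `H(λ) = [[−λ(I − ξ̂e₁ᵀ − e₁ξ̂ᵀ + ‖ξ̂‖²e₁e₁ᵀ), ½Fᵀ], [½F, 0]]`. -/
noncomputable def Hmat {k n : ℕ} (F : Matrix (Fin n) (Fin k) ℝ) (ξhat : Fin k → ℝ) (lam : ℝ) :
    Matrix (Fin k ⊕ Fin n) (Fin k ⊕ Fin n) ℝ :=
  Matrix.fromBlocks
    ((-lam) • ((1 : Matrix (Fin k) (Fin k) ℝ) - vecMulVec ξhat (e1 k) - vecMulVec (e1 k) ξhat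
        + (ξhat ⬝ᵥ ξhat) • vecMulVec (e1 k) (e1 k)))
    ((1 / 2 : ℝ) • Fᵀ) ((1 / 2 : ℝ) • F) 0

/-- The matrix `Q_j = (0;f_j)(0;f_j)ᵀ − ½(0;f_j)(e₁;0)ᵀ − ½(e₁;0)(0;f_j)ᵀ`. -/
noncomputable def Qmat (k : ℕ) {n : ℕ} (j : Fin n) :
    Matrix (Fin k ⊕ Fin n) (Fin k ⊕ Fin n) ℝ :=
  vecMulVec (Sum.elim 0 (Pi.single j 1)) (Sum.elim 0 (Pi.single j 1))
    - (1 / 2 : ℝ) • vecMulVec (Sum.elim 0 (Pi.single j 1)) (g1 k n)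
    - (1 / 2 : ℝ) • vecMulVec (g1 k n) (Sum.elim 0 (Pi.single j 1))

/-- The dual constraint matrix `α g₁g₁ᵀ − H(λ) + EᵀDiag(u)E + Σ_{j∈B} v_j Q_j + ρI`. -/
noncomputable def constraintMat {k n m : ℕ} (A : Matrix (Fin m) (Fin n) ℝ)
    (F : Matrix (Fin n) (Fin k) ℝ) (b : Fin m → ℝ) (B : Finset (Fin n))
    (ξhat : Fin k → ℝ) (lam α ρ : ℝ) (u : Fin m → ℝ) (v : Fin n → ℝ) :
    Matrix (Fin k ⊕ Fin n) (Fin k ⊕ Fin n) ℝ :=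
  α • vecMulVec (g1 k n) (g1 k n) - Hmat F ξhat lam
    + (Emat k A b)ᵀ * Matrix.diagonal u * Emat k A b
    + (∑ j ∈ B, v j • Qmat k j) + ρ • (1 : Matrix (Fin k ⊕ Fin n) (Fin k ⊕ Fin n) ℝ)

/-- The feasible set `Ω = {(ξ,x) : Ax = b, x ≥ 0, x_j ∈ {0,1} ∀ j ∈ B, ξ ∈ Ξ̂, e₁ᵀξ = 1}`. -/
def Omega {k n m : ℕ} (A : Matrix (Fin m) (Fin n) ℝ) (b : Fin m → ℝ)
    (B : Finset (Fin n)) (Ξ : Set (Fin k → ℝ)) :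
    Set ((Fin k → ℝ) × (Fin n → ℝ)) :=
  {p | A *ᵥ p.2 = b ∧ (∀ j, 0 ≤ p.2 j) ∧ (∀ j ∈ B, p.2 j = 0 ∨ p.2 j = 1) ∧
       p.1 ∈ Ξ ∧ e1 k ⬝ᵥ p.1 = 1}

/-- The homogenized feasible set
`Ω' = {z ∈ Ξ̂ × ℝ₊ⁿ : Ez = 0, g₁ᵀz = 1, zᵀz ≤ r, zᵀQ_j z = 0 ∀ j ∈ B}`. -/
noncomputable def Omega' {k n m : ℕ} (A : Matrix (Fin m) (Fin n) ℝ) (b : Fin m → ℝ)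
    (B : Finset (Fin n)) (Ξ : Set (Fin k → ℝ)) (r : ℝ) :
    Set (Fin k ⊕ Fin n → ℝ) :=
  {z | z ∈ coneProd n Ξ ∧ Emat k A b *ᵥ z = 0 ∧ g1 k n ⬝ᵥ z = 1 ∧ z ⬝ᵥ z ≤ r ∧
       ∀ j ∈ B, z ⬝ᵥ (Qmat k j *ᵥ z) = 0}

open Matrix

lemma vecMulVec_mulVec' {p q : Type*} [Fintype q] (w : p → ℝ) (v : q → ℝ) (x : q → ℝ) :
    vecMulVec w v *ᵥ x = (v ⬝ᵥ x) • w := by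
  funext i
  simp [mulVec, vecMulVec_apply, dotProduct, Finset.mul_sum, mul_assoc, mul_comm, mul_left_comm]

lemma dot_vecMulVec {p : Type*} [Fintype p] (z w v x : p → ℝ) :
    z ⬝ᵥ (vecMulVec w v *ᵥ x) = (z ⬝ᵥ w) * (v ⬝ᵥ x) := by
  rw [vecMulVec_mulVec', dotProduct_smul, smul_eq_mul, mul_comm]

section helpers
variable {k n m : ℕ}

lemma g1_dot (ξ : Fin k → ℝ) (x : Fin n → ℝ) :
    g1 k n ⬝ᵥ Sum.elim ξ x = e1 k ⬝ᵥ ξ := by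
  simp [g1, sumElim_dotProduct_sumElim]

lemma elim_dot (ξ ξ' : Fin k → ℝ) (x x' : Fin n → ℝ) :
    Sum.elim ξ x ⬝ᵥ Sum.elim ξ' x' = ξ ⬝ᵥ ξ' + x ⬝ᵥ x' :=
  sumElim_dotProduct_sumElim _ _ _ _

lemma u_dot (j : Fin n) (ξ : Fin k → ℝ) (x : Fin n → ℝ) :
    (Sum.elim (0 : Fin k → ℝ) (Pi.single j 1)) ⬝ᵥ Sum.elim ξ x = x j := by
  rw [elim_dot]
  simp [dotProduct, Pi.single_apply]

lemma Emat_mulVec (A : Matrix (Fin m) (Fin n) ℝ) (b : Fin m → ℝ)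
    (ξ : Fin k → ℝ) (x : Fin n → ℝ) :
    Emat k A b *ᵥ Sum.elim ξ x = A *ᵥ x - (e1 k ⬝ᵥ ξ) • b := by
  funext a
  simp [Emat, mulVec, dotProduct, Fintype.sum_sum_type, Finset.sum_sub_distrib,
    Finset.mul_sum, Finset.sum_mul, mul_comm, mul_left_comm, sub_eq_add_neg,
    ← Finset.sum_neg_distrib, add_comm]

lemma Qmat_quad (j : Fin n) (ξ : Fin k → ℝ) (x : Fin n → ℝ) :
    Sum.elim ξ x ⬝ᵥ (Qmat k j *ᵥ Sum.elim ξ x) = x j * x j - x j * (e1 k ⬝ᵥ ξ) := by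
  rw [Qmat]
  rw [sub_mulVec, sub_mulVec, dotProduct_sub, dotProduct_sub,
    smul_mulVec, smul_mulVec, dotProduct_smul, dotProduct_smul,
    dot_vecMulVec, dot_vecMulVec, dot_vecMulVec]
  have hu := u_dot j ξ x
  have hu' : Sum.elim ξ x ⬝ᵥ Sum.elim (0 : Fin k → ℝ) (Pi.single j 1) = x j := by
    rw [dotProduct_comm]; exact hu
  have hg := g1_dot ξ x
  have hg' : Sum.elim ξ x ⬝ᵥ g1 k n = e1 k ⬝ᵥ ξ := by
    rw [dotProduct_comm]; exact hg
  rw [hu, hu', hg, hg']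
  simp only [smul_eq_mul]
  ring

lemma Hmat_quad (F : Matrix (Fin n) (Fin k) ℝ) (ξhat : Fin k → ℝ) (lam : ℝ)
    (ξ : Fin k → ℝ) (x : Fin n → ℝ) (h1 : e1 k ⬝ᵥ ξ = 1) :
    Sum.elim ξ x ⬝ᵥ (Hmat F ξhat lam *ᵥ Sum.elim ξ x)
      = (F *ᵥ ξ) ⬝ᵥ x - lam * ((ξ - ξhat) ⬝ᵥ (ξ - ξhat)) := by
  rw [Hmat, fromBlocks_mulVec, elim_dot]
  simp only [Sum.elim_comp_inl, Sum.elim_comp_inr]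
  rw [zero_mulVec, add_zero]
  rw [dotProduct_add]
  rw [smul_mulVec, smul_mulVec, smul_mulVec,
    dotProduct_smul, dotProduct_smul, dotProduct_smul]
  rw [add_mulVec, sub_mulVec, sub_mulVec, one_mulVec, smul_mulVec,
    dotProduct_add, dotProduct_sub, dotProduct_sub, dotProduct_smul,
    dot_vecMulVec, dot_vecMulVec, dot_vecMulVec, h1]
  have ht : ξ ⬝ᵥ (Fᵀ *ᵥ x) = (F *ᵥ ξ) ⬝ᵥ x := by
    rw [dotProduct_mulVec, vecMul_transpose]
  have he : ξ ⬝ᵥ e1 k = 1 := by rw [dotProduct_comm]; exact h1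
  have hsub : (ξ - ξhat) ⬝ᵥ (ξ - ξhat)
      = ξ ⬝ᵥ ξ - ξ ⬝ᵥ ξhat - ξhat ⬝ᵥ ξ + ξhat ⬝ᵥ ξhat := by
    simp only [dotProduct_sub, sub_dotProduct]; ring
  rw [ht, he, hsub]
  have hc : ξ ⬝ᵥ ξhat = ξhat ⬝ᵥ ξ := dotProduct_comm _ _
  have hc2 : x ⬝ᵥ (F *ᵥ ξ) = (F *ᵥ ξ) ⬝ᵥ x := dotProduct_comm _ _
  rw [hc, hc2]
  simp only [smul_eq_mul]
  ring
end helpers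

theorem stmt7 (k n m : ℕ) (hk : 0 < k)
    (A : Matrix (Fin m) (Fin n) ℝ) (F : Matrix (Fin n) (Fin k) ℝ) (b : Fin m → ℝ)
    (B : Finset (Fin n)) (Ξ : Set (Fin k → ℝ)) (hΞclosed : IsClosed Ξ)
    (hΞconvex : Convex ℝ Ξ)
    (hΞcone : ∀ (c : ℝ) (x : Fin k → ℝ), 0 ≤ c → x ∈ Ξ → c • x ∈ Ξ)
    (ξhat : Fin k → ℝ) (lam : ℝ) (hlam : 0 ≤ lam) (r : ℝ)
    (hne : (Omega A b B Ξ).Nonempty)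
    (hr : ∀ p ∈ Omega A b B Ξ, p.1 ⬝ᵥ p.1 + p.2 ⬝ᵥ p.2 ≤ r) :
    Omega' A b B Ξ r = (fun p : (Fin k → ℝ) × (Fin n → ℝ) => Sum.elim p.1 p.2) '' Omega A b B Ξ
    ∧ sSup {val : ℝ | ∃ p ∈ Omega A b B Ξ,
          val = (F *ᵥ p.1) ⬝ᵥ p.2 - lam * ((p.1 - ξhat) ⬝ᵥ (p.1 - ξhat))}
      = sSup {val : ℝ | ∃ z ∈ Omega' A b B Ξ r, val = z ⬝ᵥ (Hmat F ξhat lam *ᵥ z)} := by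

  have hset : Omega' A b B Ξ r
      = (fun p : (Fin k → ℝ) × (Fin n → ℝ) => Sum.elim p.1 p.2) '' Omega A b B Ξ := by
    ext z
    constructor
    · rintro ⟨⟨hΞ, hx⟩, hE, hg, hr', hQ⟩
      set ξ : Fin k → ℝ := fun i => z (Sum.inl i) with hξ
      set x : Fin n → ℝ := fun j => z (Sum.inr j) with hx'
      have hz : z = Sum.elim ξ x := by funext s; cases s <;> rfl
      rw [hz] at hE hg hQ
      rw [g1_dot] at hg
      rw [Emat_mulVec, hg, one_smul, sub_eq_zero] at hE
      refine ⟨(ξ, x), ⟨hE, hx, ?_, hΞ, hg⟩, hz.symm⟩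
      intro j hj
      have := hQ j hj
      rw [Qmat_quad, hg, mul_one] at this
      have : x j * (x j - 1) = 0 := by ring_nf; linarith [this]
      rcases mul_eq_zero.mp this with h | h
      · exact Or.inl h
      · exact Or.inr (by linarith)
    · rintro ⟨⟨ξ, x⟩, ⟨hA, hx0, hB, hΞ, h1⟩, rfl⟩
      refine ⟨⟨hΞ, hx0⟩, ?_, ?_, ?_, ?_⟩
      · rw [Emat_mulVec, h1, one_smul, hA, sub_self]
      · rw [g1_dot]; exact h1
      · rw [elim_dot]; exact hr (ξ, x) ⟨hA, hx0, hB, hΞ, h1⟩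
      · intro j hj
        rw [Qmat_quad, h1, mul_one]
        rcases hB j hj with h | h <;> rw [h] <;> ring
  refine ⟨hset, ?_⟩
  congr 1
  ext v
  constructor
  · rintro ⟨p, hp, rfl⟩
    refine ⟨Sum.elim p.1 p.2, ?_, (Hmat_quad F ξhat lam p.1 p.2 hp.2.2.2.2).symm⟩
    rw [hset]; exact ⟨p, hp, rfl⟩
  · rintro ⟨z, hz, rfl⟩
    rw [hset] at hz
    obtain ⟨p, hp, rfl⟩ := hz
    exact ⟨p, hp, Hmat_quad F ξhat lam p.1 p.2 hp.2.2.2.2⟩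
end

section
/- Let Ξ̂ := {ξ ∈ ℝ^k : ‖(ξ₂, …, ξ_k)‖ ≤ ξ₁} be the second-order cone in ℝ^k, and let J := Diag(1, −1, …, −1) ∈ S^k. Then COP(Ξ̂) = {τJ + M : τ ≥ 0, M ∈ S^k positive semidefinite}; that is, a symmetric matrix S satisfies ξᵀSξ ≥ 0 for all ξ ∈ Ξ̂ if and only if S = τJ + M for some scalar τ ≥ 0 and some positive semidefinite matrix M. -/
open Matrix
set_option maxRecDepth 4000

lemma key_alg (a b A B cp cq : ℝ) (ha : a < 0) (hb : 0 < b)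
    (h : ∀ s : ℝ, b * s ^ 2 + cp * s + a = 0 → 0 ≤ B * s ^ 2 + cq * s + A) :
    0 ≤ A * b - B * a := by
  have hDpos : 0 < cp ^ 2 - 4 * b * a := by nlinarith
  set sd := Real.sqrt (cp ^ 2 - 4 * b * a) with hsd
  have hsd2 : sd ^ 2 = cp ^ 2 - 4 * b * a := Real.sq_sqrt hDpos.le
  have hsdpos : 0 < sd := Real.sqrt_pos.mpr hDpos
  set s₁ := (-cp - sd) / (2 * b) with hs₁
  set s₂ := (-cp + sd) / (2 * b) with hs₂
  have hb2 : (2 * b) ≠ 0 := by positivity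
  have e₁ : b * s₁ ^ 2 + cp * s₁ + a = 0 := by
    have : b * s₁ ^ 2 + cp * s₁ + a = (sd ^ 2 - (cp ^ 2 - 4 * b * a)) / (4 * b) := by
      rw [hs₁]; field_simp; ring
    rw [this, hsd2]; simp
  have e₂ : b * s₂ ^ 2 + cp * s₂ + a = 0 := by
    have : b * s₂ ^ 2 + cp * s₂ + a = (sd ^ 2 - (cp ^ 2 - 4 * b * a)) / (4 * b) := by
      rw [hs₂]; field_simp; ring
    rw [this, hsd2]; simp
  have h1 := h s₁ e₁
  have h2 := h s₂ e₂
  have hdiff : s₂ - s₁ = sd / b := by rw [hs₁, hs₂]; field_simp; ring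
  have hprod : s₁ * s₂ = a / b := by
    have : s₁ * s₂ = (cp ^ 2 - sd ^ 2) / (4 * b ^ 2) := by rw [hs₁, hs₂]; field_simp; ring
    rw [this, hsd2]; field_simp; ring
  have hlt : s₁ < s₂ := by
    have : 0 < s₂ - s₁ := by rw [hdiff]; positivity
    linarith
  have hss : s₁ * s₂ < 0 := by rw [hprod]; exact div_neg_of_neg_of_pos ha hb
  have hs₁neg : s₁ < 0 := by nlinarith
  have hs₂pos : 0 < s₂ := by nlinarith
  have key : 0 ≤ (s₂ - s₁) * (A - s₁ * s₂ * B) := by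
    nlinarith [mul_nonneg hs₂pos.le h1, mul_nonneg (neg_nonneg.mpr hs₁neg.le) h2]
  have h3 : 0 ≤ A - s₁ * s₂ * B := by nlinarith
  rw [hprod] at h3
  have hh := mul_nonneg h3 hb.le
  calc (0:ℝ) ≤ (A - a / b * B) * b := hh
    _ = A * b - B * a := by field_simp

lemma quad_expand {k : ℕ} (A : Matrix (Fin k) (Fin k) ℝ) (x y : Fin k → ℝ) (s : ℝ) :
    (x + s • y) ⬝ᵥ (A *ᵥ (x + s • y))
      = (y ⬝ᵥ (A *ᵥ y)) * s ^ 2 + (x ⬝ᵥ (A *ᵥ y) + y ⬝ᵥ (A *ᵥ x)) * s + x ⬝ᵥ (A *ᵥ x) := by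
  simp only [mulVec_add, mulVec_smul, dotProduct_add, add_dotProduct, dotProduct_smul,
    smul_dotProduct, smul_eq_mul]
  ring

lemma p_formula (k : ℕ) (hk : 0 < k) (x : Fin k → ℝ) :
    x ⬝ᵥ ((diagonal fun i : Fin k => if (i : ℕ) = 0 then (1:ℝ) else -1) *ᵥ x)
      = x ⟨0, hk⟩ ^ 2 - ∑ i ∈ Finset.univ.filter (fun i : Fin k => (i : ℕ) ≠ 0), x i ^ 2 := by
  have h0 : (Finset.univ.filter fun i : Fin k => ¬ (i : ℕ) ≠ 0) = {⟨0, hk⟩} := by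
    ext i
    simp [Fin.ext_iff]
  have hsplit := Finset.sum_filter_add_sum_filter_not (Finset.univ : Finset (Fin k))
      (fun i => (i : ℕ) ≠ 0)
      (fun i => x i * ((if (i : ℕ) = 0 then (1:ℝ) else -1) * x i))
  have hA : ∑ i ∈ Finset.univ.filter (fun i : Fin k => (i : ℕ) ≠ 0),
      x i * ((if (i : ℕ) = 0 then (1:ℝ) else -1) * x i)
      = -∑ i ∈ Finset.univ.filter (fun i : Fin k => (i : ℕ) ≠ 0), x i ^ 2 := by
    rw [← Finset.sum_neg_distrib]
    refine Finset.sum_congr rfl fun i hi => ?_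
    simp only [Finset.mem_filter] at hi
    rw [if_neg hi.2]
    ring
  simp only [dotProduct, mulVec_diagonal]
  rw [← hsplit, hA, h0, Finset.sum_singleton]
  simp
  ring

theorem stmt10 (k : ℕ) (hk : 0 < k) :
    copositiveCone {ξ : Fin k → ℝ |
        Real.sqrt (∑ i ∈ Finset.univ.filter (fun i : Fin k => (i : ℕ) ≠ 0), (ξ i) ^ 2)
          ≤ ξ ⟨0, hk⟩}
      = {S : Matrix (Fin k) (Fin k) ℝ | ∃ (τ : ℝ) (M : Matrix (Fin k) (Fin k) ℝ),
          0 ≤ τ ∧ M.PosSemidef ∧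
          S = τ • Matrix.diagonal (fun i : Fin k => if (i : ℕ) = 0 then (1 : ℝ) else -1) + M} := by
  set v : Fin k → ℝ := fun i => if (i : ℕ) = 0 then (1 : ℝ) else -1 with hv
  set J : Matrix (Fin k) (Fin k) ℝ := Matrix.diagonal v with hJ
  have pJ : ∀ x : Fin k → ℝ, x ⬝ᵥ (J *ᵥ x)
      = x ⟨0, hk⟩ ^ 2 - ∑ i ∈ Finset.univ.filter (fun i : Fin k => (i : ℕ) ≠ 0), x i ^ 2 := by
    intro x
    rw [hJ, hv]
    exact p_formula k hk x
  have hsum : ∀ x : Fin k → ℝ,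
      0 ≤ ∑ i ∈ Finset.univ.filter (fun i : Fin k => (i : ℕ) ≠ 0), x i ^ 2 :=
    fun x => Finset.sum_nonneg fun i _ => sq_nonneg _
  ext S
  simp only [copositiveCone, Set.mem_setOf_eq]
  constructor
  · rintro ⟨hsymm, hcop⟩
    -- Step 1: copositivity on the full region {p ≥ 0}
    have hq : ∀ z : Fin k → ℝ, 0 ≤ z ⬝ᵥ (J *ᵥ z) → 0 ≤ z ⬝ᵥ (S *ᵥ z) := by
      intro z hz
      rw [pJ z] at hz
      by_cases h0 : 0 ≤ z ⟨0, hk⟩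
      · exact hcop z (Real.sqrt_le_iff.mpr ⟨h0, by linarith⟩)
      · push_neg at h0
        have hmem : (-z) ∈ {ξ : Fin k → ℝ |
            Real.sqrt (∑ i ∈ Finset.univ.filter (fun i : Fin k => (i : ℕ) ≠ 0), (ξ i) ^ 2)
              ≤ ξ ⟨0, hk⟩} := by
          have : ∑ i ∈ Finset.univ.filter (fun i : Fin k => (i : ℕ) ≠ 0), ((-z) i) ^ 2
              = ∑ i ∈ Finset.univ.filter (fun i : Fin k => (i : ℕ) ≠ 0), z i ^ 2 := by
            refine Finset.sum_congr rfl fun i _ => ?_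
            rw [Pi.neg_apply, neg_sq]
          show Real.sqrt _ ≤ _
          rw [this]
          refine Real.sqrt_le_iff.mpr ⟨?_, ?_⟩
          · simp only [Pi.neg_apply]; linarith
          · simp only [Pi.neg_apply]
            nlinarith
        have h2 := hcop (-z) hmem
        simpa [mulVec_neg, dotProduct_neg, neg_dotProduct] using h2
    -- Step 2: define τ as the infimum of the Rayleigh-like ratios
    set T : Set ℝ := {r : ℝ | ∃ y : Fin k → ℝ, 0 < y ⬝ᵥ (J *ᵥ y) ∧ r = y ⬝ᵥ (S *ᵥ y) / (y ⬝ᵥ (J *ᵥ y))} with hT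
    have hTlb : ∀ r ∈ T, (0:ℝ) ≤ r := by
      rintro r ⟨y, hy, rfl⟩
      exact div_nonneg (hq y hy.le) hy.le
    have hbdd : BddBelow T := ⟨0, hTlb⟩
    have hTne : T.Nonempty := by
      refine ⟨_, fun i => if (i : ℕ) = 0 then (1:ℝ) else 0, ?_, rfl⟩
      rw [pJ]
      have h1 : (fun i : Fin k => if (i : ℕ) = 0 then (1:ℝ) else 0) ⟨0, hk⟩ = 1 := by simp
      have h2 : ∑ i ∈ Finset.univ.filter (fun i : Fin k => (i : ℕ) ≠ 0),
          (if (i : ℕ) = 0 then (1:ℝ) else 0) ^ 2 = 0 := by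
        refine Finset.sum_eq_zero fun i hi => ?_
        simp only [Finset.mem_filter] at hi
        rw [if_neg hi.2]
        ring
      rw [h2]
      norm_num
    set τ := sInf T with hτ
    have hτ0 : 0 ≤ τ := le_csInf hTne hTlb
    -- Step 3: S - τ J is positive semidefinite
    have hlb : ∀ x : Fin k → ℝ, τ * (x ⬝ᵥ (J *ᵥ x)) ≤ x ⬝ᵥ (S *ᵥ x) := by
      intro x
      rcases lt_trichotomy (x ⬝ᵥ (J *ᵥ x)) 0 with hx | hx | hx
      · have hkey : ∀ r ∈ T, x ⬝ᵥ (S *ᵥ x) / (x ⬝ᵥ (J *ᵥ x)) ≤ r := by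
          rintro r ⟨y, hy, rfl⟩
          have hmain : 0 ≤ (x ⬝ᵥ (S *ᵥ x)) * (y ⬝ᵥ (J *ᵥ y))
              - (y ⬝ᵥ (S *ᵥ y)) * (x ⬝ᵥ (J *ᵥ x)) := by
            refine key_alg (x ⬝ᵥ (J *ᵥ x)) (y ⬝ᵥ (J *ᵥ y)) (x ⬝ᵥ (S *ᵥ x)) (y ⬝ᵥ (S *ᵥ y))
              (x ⬝ᵥ (J *ᵥ y) + y ⬝ᵥ (J *ᵥ x)) (x ⬝ᵥ (S *ᵥ y) + y ⬝ᵥ (S *ᵥ x)) hx hy ?_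
            intro s hs
            have hz := hq (x + s • y) (by rw [quad_expand J x y s]; exact le_of_eq hs.symm)
            rw [quad_expand S x y s] at hz
            exact hz
          rw [div_le_iff_of_neg hx, div_mul_eq_mul_div, div_le_iff₀ hy]
          linarith
        have hge : x ⬝ᵥ (S *ᵥ x) / (x ⬝ᵥ (J *ᵥ x)) ≤ τ := le_csInf hTne hkey
        exact (div_le_iff_of_neg hx).mp hge
      · rw [hx, mul_zero]
        exact hq x (le_of_eq hx.symm)
      · have hmem : x ⬝ᵥ (S *ᵥ x) / (x ⬝ᵥ (J *ᵥ x)) ∈ T := ⟨x, hx, rfl⟩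
        have hle := csInf_le hbdd hmem
        rw [le_div_iff₀ hx] at hle
        linarith
    refine ⟨τ, S - τ • J, hτ0, PosSemidef.of_dotProduct_mulVec_nonneg ?_ ?_, by abel⟩
    · show (S - τ • J)ᴴ = S - τ • J
      rw [conjTranspose_eq_transpose_of_trivial, transpose_sub, transpose_smul, hsymm.eq]
      rw [hJ, (isSymm_diagonal v).eq]
    · intro z
      have hstar : star z = z := by simp
      rw [hstar, sub_mulVec, dotProduct_sub, smul_mulVec, dotProduct_smul, smul_eq_mul]
      have := hlb z
      linarith
  · rintro ⟨τ, M, hτ, hM, rfl⟩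
    constructor
    · show (τ • J + M)ᵀ = τ • J + M
      rw [transpose_add, transpose_smul, hJ, (isSymm_diagonal v).eq]
      have hMsymm : Mᵀ = M := by
        have := hM.1
        rwa [Matrix.IsHermitian, conjTranspose_eq_transpose_of_trivial] at this
      rw [hMsymm]
    · intro x hx
      have hx' : Real.sqrt (∑ i ∈ Finset.univ.filter (fun i : Fin k => (i : ℕ) ≠ 0), (x i) ^ 2)
          ≤ x ⟨0, hk⟩ := hx
      have hx0 : 0 ≤ x ⟨0, hk⟩ := le_trans (Real.sqrt_nonneg _) hx'
      have hsumx : ∑ i ∈ Finset.univ.filter (fun i : Fin k => (i : ℕ) ≠ 0), x i ^ 2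
          ≤ x ⟨0, hk⟩ ^ 2 := (Real.sqrt_le_left hx0).mp hx'
      have hp : 0 ≤ x ⬝ᵥ (J *ᵥ x) := by rw [pJ x]; linarith
      have hMx : 0 ≤ x ⬝ᵥ (M *ᵥ x) := by
        have := hM.dotProduct_mulVec_nonneg x
        simpa using this
      rw [add_mulVec, dotProduct_add, smul_mulVec, dotProduct_smul, smul_eq_mul]
      have := mul_nonneg hτ hp
      linarith
end
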